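/- In BS(1,p) with p ≥ 2, for any word w over {a^{±1}, t^{±1}} of length n with nonnegative t-exponent sum, there exists a word of the form t⁻ᵏ a^{ε₀} t ⋯ t a^{ε_q} t⁻ᵐ representing the same element with length at most n, where additionally ε₀ ≠ 0 if k > 0 and ε_q ≠ 0 if m > 0 and |ε_i| < p for i < q, |ε_q| < 3p, k, m ≥ 0, q ≥ k + m. (Existence only, no complexity claim.) -/

import Mathlib

/-- The single defining relation of `BS(1,p)`: `t a t⁻¹ a^{-p}`. -/
def BSrel (p : ℕ) : Set (FreeGroup Bool) :=
  {FreeGroup.of true * FreeGroup.of false * (FreeGroup.of true)⁻¹ * (FreeGroup.of false ^ p)⁻¹}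

/-- The solvable Baumslag–Solitar group `BS(1,p) = ⟨a, t | t a t⁻¹ = aᵖ⟩`. -/
abbrev BS (p : ℕ) : Type := PresentedGroup (BSrel p)

/-- The generator `a` of `BS(1,p)`. -/
def gena (p : ℕ) : BS p := PresentedGroup.of false

/-- The generator `t` of `BS(1,p)`. -/
def gent (p : ℕ) : BS p := PresentedGroup.of true

/-- A letter over the alphabet `{a, a⁻¹, t, t⁻¹}`: first component `false` = `a`,
`true` = `t`; second component is the sign (`true` = positive). -/
abbrev Letter : Type := Bool × Bool

/-- Value of a letter in `BS(1,p)`. -/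
def letterVal (p : ℕ) : Letter → BS p
  | (g, s) => (if g then gent p else gena p) ^ (if s then (1 : ℤ) else -1)

/-- The element of `BS(1,p)` represented by a word. -/
def wordVal (p : ℕ) (w : List Letter) : BS p := (w.map (letterVal p)).prod

def tP : Letter := (true, true)
def tN : Letter := (true, false)
def aP : Letter := (false, true)
def aN : Letter := (false, false)

/-- `t`-exponent sum of a word. -/
def texp (w : List Letter) : ℤ := (w.count tP : ℤ) - (w.count tN : ℤ)

/-- A word of type `P`: contains at least one `t` and no `t⁻¹`. -/
def TypeP (w : List Letter) : Prop := tP ∈ w ∧ tN ∉ w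

/-- A word of type `N`: contains at least one `t⁻¹` and no `t`. -/
def TypeN (w : List Letter) : Prop := tN ∈ w ∧ tP ∉ w

/-- The word `a^x` (as a string of `|x|` letters). -/
def aWord (x : ℤ) : List Letter := List.replicate x.natAbs (false, decide (0 < x))

/-- The word `a^{ε₀} t a^{ε₁} t ⋯ t a^{ε_q}`. -/
def stackWord (ε : ℕ → ℤ) (q : ℕ) : List Letter :=
  ((List.range q).map (fun i => aWord (ε i) ++ [tP])).flatten ++ aWord (ε q)

/-- The word `t⁻ᵏ a^{ε₀} t ⋯ t a^{ε_q} t⁻ᵐ`. -/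
def canonWord (k : ℕ) (ε : ℕ → ℤ) (q m : ℕ) : List Letter :=
  List.replicate k tN ++ stackWord ε q ++ List.replicate m tN

/-- `ℤ[1/p]` as an additive subgroup of `ℚ`. -/
def Zp (p : ℕ) : AddSubgroup ℚ := AddSubgroup.closure {x : ℚ | ∃ n : ℕ, x = ((p : ℚ))⁻¹ ^ n}


/-!
Let `-d` and `u` be the least and greatest `t`-exponent sums of prefixes of `w`, and `s = texp w`.
Moving every letter `a^{±1}` to the front through the relation `t a = a^p t` gives
`w = t^{-d} a^E t^{d+s}` with `E = ∑_{l ≤ d+u} c_l p^l`, where `c_l` is the signed number of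
`a`-letters read at height `l - d`, so `∑ |c_l| ≤ #a`, the number of `a`-letters. Carrying
from the lowest place upwards turns the `c_l` into digits `ε_i` with `|ε_i| < p` below the top and
`|ε_q| < 3p`; every carry beyond place `d + u` costs a `t` and a `t⁻¹` but lowers `∑ |ε_i|` by two.
The word `t^{-d} a^{ε_0} t ⋯ t a^{ε_q} t^{-(q-d-s)}` then has length at most
`2(d + u) - s + #a ≤ #t + #a = |w|`, since a walk from `0` to `s` through the heights `-d` and `u`
has at least `2(d + u) - s` steps. Finally, zero digits next to `t^{-k}` or `t^{-m}` are absorbed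
into these powers, two letters at a time.
-/

open Finset Polynomial

lemma sum_range_succ_mul_pow {R : Type*} [CommSemiring R] (f : ℕ → R) (x : R) (n : ℕ) :
    ∑ i ∈ range (n + 1), f i * x ^ i = f 0 + x * ∑ i ∈ range n, f (i + 1) * x ^ i := by
  rw [sum_range_succ', mul_sum, add_comm]
  simp only [pow_succ, pow_zero, mul_one]
  congr 1
  exact sum_congr rfl fun i _ => by ring

section Relation

variable (p : ℕ)

lemma gent_mul_gena_mul_gent_inv : gent p * gena p * (gent p)⁻¹ = gena p ^ p := by
  have h := PresentedGroup.one_of_mem (rels := BSrel p) rfl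
  simp only [map_mul, map_inv, map_pow] at h
  exact mul_inv_eq_one.1 h

lemma gent_mul_gena_zpow (z : ℤ) : gent p * gena p ^ z = gena p ^ ((p : ℤ) * z) * gent p := by
  rw [zpow_mul, zpow_natCast, ← gent_mul_gena_mul_gent_inv, conj_zpow]
  group

lemma gent_pow_mul_gena_zpow (n : ℕ) (z : ℤ) :
    gent p ^ n * gena p ^ z = gena p ^ ((p : ℤ) ^ n * z) * gent p ^ n := by
  induction n generalizing z with
  | zero => simp
  | succ n ih =>
    rw [pow_succ, mul_assoc, gent_mul_gena_zpow, ← mul_assoc, ih, mul_assoc, ← pow_succ,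
      pow_succ (p : ℤ), mul_assoc]

end Relation

section WordValue

variable (p : ℕ)

lemma letterVal_a (s : Bool) : letterVal p (false, s) = gena p ^ (if s then 1 else -1 : ℤ) := rfl

lemma letterVal_t : letterVal p (true, true) = gent p := zpow_one _

lemma letterVal_t_inv : letterVal p (true, false) = (gent p)⁻¹ := zpow_neg_one _

lemma wordVal_cons (x : Letter) (w : List Letter) :
    wordVal p (x :: w) = letterVal p x * wordVal p w := by
  simp [wordVal]

lemma wordVal_append (u v : List Letter) : wordVal p (u ++ v) = wordVal p u * wordVal p v := by
  simp [wordVal]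

lemma wordVal_aWord (x : ℤ) : wordVal p (aWord x) = gena p ^ x := by
  rw [aWord, wordVal, List.map_replicate, List.prod_replicate, letterVal_a, ← zpow_natCast,
    ← zpow_mul]
  congr 1
  split_ifs with hx <;> simp only [decide_eq_true_eq] at hx <;> omega

lemma wordVal_replicate_tN (m : ℕ) : wordVal p (List.replicate m tN) = gent p ^ (-(m : ℤ)) := by
  rw [wordVal, List.map_replicate, List.prod_replicate, tN, letterVal_t_inv, inv_pow, zpow_neg,
    zpow_natCast]

lemma stackWord_succ (ε : ℕ → ℤ) (q : ℕ) :
    stackWord ε (q + 1) = aWord (ε 0) ++ tP :: stackWord (fun i => ε (i + 1)) q := by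
  simp [stackWord, List.range_succ_eq_map, Function.comp_def]

lemma wordVal_stackWord (ε : ℕ → ℤ) (q : ℕ) :
    wordVal p (stackWord ε q) = gena p ^ (∑ i ∈ range (q + 1), ε i * (p : ℤ) ^ i) * gent p ^ q := by
  induction q generalizing ε with
  | zero => simp [stackWord, wordVal_aWord]
  | succ q ih =>
    rw [stackWord_succ, wordVal_append, wordVal_cons, tP, letterVal_t, wordVal_aWord, ih,
      ← mul_assoc (gent p), gent_mul_gena_zpow, sum_range_succ_mul_pow _ _ (q + 1), zpow_add,
      pow_succ']
    group

lemma wordVal_canonWord (k : ℕ) (ε : ℕ → ℤ) (q m : ℕ) :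
    wordVal p (canonWord k ε q m) =
      gent p ^ (-(k : ℤ)) * gena p ^ (∑ i ∈ range (q + 1), ε i * (p : ℤ) ^ i) *
        gent p ^ ((q : ℤ) - m) := by
  rw [canonWord, wordVal_append, wordVal_append, wordVal_replicate_tN, wordVal_stackWord,
    wordVal_replicate_tN, sub_eq_add_neg, zpow_add, zpow_natCast]
  group

lemma length_stackWord (ε : ℕ → ℤ) (q : ℕ) :
    (stackWord ε q).length = q + ∑ i ∈ range (q + 1), (ε i).natAbs := by
  induction q generalizing ε with
  | zero => simp [stackWord, aWord]
  | succ q ih =>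
    rw [stackWord_succ, sum_range_succ']
    simp only [List.length_append, List.length_cons, ih, aWord, List.length_replicate]
    omega

lemma length_canonWord (k : ℕ) (ε : ℕ → ℤ) (q m : ℕ) :
    (canonWord k ε q m).length = k + m + q + ∑ i ∈ range (q + 1), (ε i).natAbs := by
  simp only [canonWord, List.length_append, List.length_replicate, length_stackWord]
  omega

end WordValue

section Height

def letterTexp : Letter → ℤ
  | (false, _) => 0
  | (true, true) => 1
  | (true, false) => -1

lemma texp_cons (x : Letter) (w : List Letter) : texp (x :: w) = letterTexp x + texp w := by
  rcases x with ⟨_ | _, _ | _⟩ <;> simp [texp, letterTexp, tP, tN] <;> ring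

/-- The least value of `texp` on the prefixes of `w`. -/
def minPrefixTexp : List Letter → ℤ
  | [] => 0
  | x :: w => min 0 (letterTexp x + minPrefixTexp w)

/-- The greatest value of `texp` on the prefixes of `w`. -/
def maxPrefixTexp : List Letter → ℤ
  | [] => 0
  | x :: w => max 0 (letterTexp x + maxPrefixTexp w)

def tCount (w : List Letter) : ℕ := w.countP (·.1)

lemma tCount_cons (b s : Bool) (w : List Letter) :
    tCount ((b, s) :: w) = tCount w + if b then 1 else 0 :=
  List.countP_cons

lemma minPrefixTexp_nonpos (w : List Letter) : minPrefixTexp w ≤ 0 := by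
  cases w <;> simp [minPrefixTexp]

lemma maxPrefixTexp_nonneg (w : List Letter) : 0 ≤ maxPrefixTexp w := by
  cases w <;> simp [maxPrefixTexp]

lemma minPrefixTexp_le_texp (w : List Letter) : minPrefixTexp w ≤ texp w := by
  induction w with
  | nil => rfl
  | cons x w ih => rw [texp_cons, minPrefixTexp]; omega

lemma texp_le_maxPrefixTexp (w : List Letter) : texp w ≤ maxPrefixTexp w := by
  induction w with
  | nil => rfl
  | cons x w ih => rw [texp_cons, maxPrefixTexp]; omega

/-- A walk from `0` to `texp w` that visits both extreme heights takes at least this many steps. -/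
lemma two_mul_sub_le_tCount_add_natAbs (w : List Letter) :
    2 * (maxPrefixTexp w - minPrefixTexp w) ≤ tCount w + (texp w).natAbs := by
  induction w with
  | nil => simp [maxPrefixTexp, minPrefixTexp, tCount, texp]
  | cons x w ih =>
    have := minPrefixTexp_nonpos w
    have := maxPrefixTexp_nonneg w
    have := minPrefixTexp_le_texp w
    have := texp_le_maxPrefixTexp w
    rw [texp_cons]
    rcases x with ⟨_ | _, _ | _⟩ <;>
      simp only [maxPrefixTexp, minPrefixTexp, tCount_cons, letterTexp, Bool.false_eq_true,
        ↓reduceIte] <;>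
      omega

end Height

section APoly

/-- The coefficient of `X ^ l` is the signed number of letters `a^{±1}` of `w` read at height
`l - D`; it is only meaningful when the heights stay above `-D` (`D - 1` truncates at `0`). -/
noncomputable def aPoly : ℕ → List Letter → ℤ[X]
  | _, [] => 0
  | D, (false, s) :: w => monomial D (if s then 1 else -1) + aPoly D w
  | D, (true, true) :: w => aPoly (D + 1) w
  | D, (true, false) :: w => aPoly (D - 1) w

variable (p : ℕ)

lemma gent_pow_mul_wordVal (D : ℕ) (w : List Letter) (hD : -(D : ℤ) ≤ minPrefixTexp w) :
    gent p ^ D * wordVal p w = gena p ^ (aPoly D w).eval (p : ℤ) * gent p ^ ((D : ℤ) + texp w) := by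
  induction w generalizing D with
  | nil => simp [wordVal, aPoly, texp]
  | cons x w ih =>
    have := minPrefixTexp_nonpos w
    rw [wordVal_cons, texp_cons]
    rcases x with ⟨_ | _, s⟩
    · rw [minPrefixTexp, letterTexp] at hD
      rw [letterVal_a, ← mul_assoc, gent_pow_mul_gena_zpow, mul_assoc, ih D (by omega), aPoly,
        eval_add, eval_monomial, letterTexp, zero_add, ← mul_assoc, ← zpow_add, mul_comm]
    cases s <;> rw [minPrefixTexp, letterTexp] at hD
    · obtain ⟨D, rfl⟩ : ∃ D', D = D' + 1 := ⟨D - 1, by omega⟩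
      rw [letterVal_t_inv, pow_succ, mul_assoc, mul_inv_cancel_left, ih D (by omega), aPoly,
        letterTexp, Nat.add_sub_cancel]
      push_cast
      ring_nf
    · rw [letterVal_t, ← mul_assoc, ← pow_succ, ih (D + 1) (by omega), aPoly, letterTexp]
      push_cast
      ring_nf

lemma natDegree_aPoly_le (D : ℕ) (w : List Letter) (hD : -(D : ℤ) ≤ minPrefixTexp w) :
    ((aPoly D w).natDegree : ℤ) ≤ D + maxPrefixTexp w := by
  induction w generalizing D with
  | nil => simp [aPoly, maxPrefixTexp]
  | cons x w ih =>
    have := minPrefixTexp_nonpos w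
    rcases x with ⟨_ | _, s⟩
    · rw [minPrefixTexp, letterTexp] at hD
      rw [aPoly, maxPrefixTexp, letterTexp]
      have := natDegree_add_le (monomial D (if s then 1 else -1 : ℤ)) (aPoly D w)
      have := natDegree_monomial_le (if s then 1 else -1 : ℤ) (m := D)
      have := ih D (by omega)
      omega
    cases s <;> rw [minPrefixTexp, letterTexp] at hD <;> rw [aPoly, maxPrefixTexp, letterTexp]
    · have := ih (D - 1) (by omega)
      omega
    · have := ih (D + 1) (by omega)
      omega

lemma sum_natAbs_coeff_monomial_add_le (D M : ℕ) (c : ℤ) (P : ℤ[X]) :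
    ∑ l ∈ range M, ((monomial D c + P).coeff l).natAbs ≤
      c.natAbs + ∑ l ∈ range M, (P.coeff l).natAbs := by
  calc _ ≤ ∑ l ∈ range M, (((monomial D c).coeff l).natAbs + (P.coeff l).natAbs) :=
        sum_le_sum fun l _ => by rw [coeff_add]; exact Int.natAbs_add_le _ _
    _ ≤ _ := by
        rw [sum_add_distrib]
        gcongr
        simp only [coeff_monomial, apply_ite Int.natAbs, Int.natAbs_zero, sum_ite_eq, mem_range]
        split_ifs <;> simp

lemma sum_natAbs_coeff_aPoly_add_tCount_le (D M : ℕ) (w : List Letter) :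
    ∑ l ∈ range M, ((aPoly D w).coeff l).natAbs + tCount w ≤ w.length := by
  induction w generalizing D with
  | nil => simp [aPoly, tCount]
  | cons x w ih =>
    rcases x with ⟨_ | _, s⟩
    · have := sum_natAbs_coeff_monomial_add_le D M (if s then 1 else -1) (aPoly D w)
      have := ih D
      rw [aPoly, tCount_cons, List.length_cons]
      cases s <;> simp only [Bool.false_eq_true, ↓reduceIte] at * <;> omega
    cases s <;> rw [aPoly, tCount_cons, List.length_cons] <;> simp only [↓reduceIte]
    · have := ih (D - 1)
      omega
    · have := ih (D + 1)
      omega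

end APoly

section Digits

def DigitBounds (p : ℕ) (ε : ℕ → ℤ) (q : ℕ) : Prop :=
  (∀ i < q, (ε i).natAbs < p) ∧ (ε q).natAbs < 3 * p

def prependDigit (e : ℤ) (ε : ℕ → ℤ) : ℕ → ℤ
  | 0 => e
  | i + 1 => ε i

variable {p : ℕ}

lemma DigitBounds.prependDigit {e : ℤ} {ε : ℕ → ℤ} {q : ℕ} (he : e.natAbs < p)
    (h : DigitBounds p ε q) : DigitBounds p (prependDigit e ε) (q + 1) := by
  refine ⟨fun i hi => ?_, h.2⟩
  cases i with
  | zero => exact he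
  | succ i => exact h.1 i (by omega)

lemma sum_prependDigit_mul_pow (e : ℤ) (ε : ℕ → ℤ) (q : ℕ) :
    ∑ i ∈ range (q + 2), prependDigit e ε i * (p : ℤ) ^ i =
      e + p * ∑ i ∈ range (q + 1), ε i * (p : ℤ) ^ i :=
  sum_range_succ_mul_pow _ _ _

lemma sum_natAbs_prependDigit (e : ℤ) (ε : ℕ → ℤ) (q : ℕ) :
    ∑ i ∈ range (q + 2), (prependDigit e ε i).natAbs =
      e.natAbs + ∑ i ∈ range (q + 1), (ε i).natAbs := by
  rw [sum_range_succ', add_comm]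
  rfl

lemma exists_digit_split (hp : 2 ≤ p) (v : ℤ) :
    ∃ e g : ℤ, v = e + p * g ∧ e.natAbs < p ∧ e.natAbs + g.natAbs ≤ v.natAbs ∧
      (3 * p ≤ v.natAbs → e.natAbs + g.natAbs + 2 ≤ v.natAbs) := by
  refine ⟨v.tmod p, v.tdiv p, (Int.tmod_add_mul_tdiv v p).symm, ?_⟩
  have he : (v.tmod p).natAbs = v.natAbs % p := Int.natAbs_tmod v p
  have hg : (v.tdiv p).natAbs = v.natAbs / p := Int.natAbs_tdiv v p
  rw [he, hg]
  have := Nat.mod_add_div v.natAbs p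
  have := Nat.mod_lt v.natAbs (by omega : 0 < p)
  have : 2 * (v.natAbs / p) ≤ p * (v.natAbs / p) := Nat.mul_le_mul_right _ hp
  refine ⟨by assumption, by omega, fun h => ?_⟩
  have : 3 ≤ v.natAbs / p := (Nat.le_div_iff_mul_le (by omega)).2 (by omega)
  omega

lemma exists_digits_eq (hp : 2 ≤ p) (v : ℤ) :
    ∃ (q : ℕ) (ε : ℕ → ℤ), ∑ i ∈ range (q + 1), ε i * (p : ℤ) ^ i = v ∧ DigitBounds p ε q ∧
      ∑ i ∈ range (q + 1), (ε i).natAbs + 2 * q ≤ v.natAbs := by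
  induction hn : v.natAbs using Nat.strong_induction_on generalizing v with
  | _ n ih =>
  subst hn
  by_cases hv : v.natAbs < 3 * p
  · exact ⟨0, fun _ => v, by simp, ⟨by simp, hv⟩, by simp⟩
  obtain ⟨e, g, rfl, he, -, hcost⟩ := exists_digit_split hp v
  have hcost := hcost (not_lt.1 hv)
  obtain ⟨q, ε, hsum, hε, hεcost⟩ := ih g.natAbs (by omega) g rfl
  refine ⟨q + 1, prependDigit e ε, ?_, hε.prependDigit he, ?_⟩
  · rw [sum_prependDigit_mul_pow, hsum]
  · rw [sum_natAbs_prependDigit]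
    omega

lemma exists_digits_eq_add_mul_sum (hp : 2 ≤ p) (H : ℕ) (v : ℤ) (c : ℕ → ℤ) :
    ∃ (q : ℕ) (ε : ℕ → ℤ), H ≤ q ∧
      ∑ i ∈ range (q + 1), ε i * (p : ℤ) ^ i = v + p * ∑ l ∈ range H, c l * (p : ℤ) ^ l ∧
      DigitBounds p ε q ∧
      ∑ i ∈ range (q + 1), (ε i).natAbs + 2 * (q - H) ≤
        v.natAbs + ∑ l ∈ range H, (c l).natAbs := by
  induction H generalizing v c with
  | zero =>
    obtain ⟨q, ε, hsum, hε, hcost⟩ := exists_digits_eq hp v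
    exact ⟨q, ε, q.zero_le, by simpa using hsum, hε, by simpa using hcost⟩
  | succ H ih =>
    obtain ⟨e, g, rfl, he, hcost, -⟩ := exists_digit_split hp v
    obtain ⟨q, ε, hHq, hsum, hε, hεcost⟩ := ih (g + c 0) (fun l => c (l + 1))
    refine ⟨q + 1, prependDigit e ε, by omega, ?_, hε.prependDigit he, ?_⟩
    · rw [sum_prependDigit_mul_pow, hsum, sum_range_succ_mul_pow]
      ring
    · rw [sum_natAbs_prependDigit, sum_range_succ' (fun l => (c l).natAbs)]
      have := Int.natAbs_add_le g (c 0)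
      omega

end Digits

section Canonical

variable (p : ℕ)

def Reduces (v w : List Letter) : Prop := wordVal p v = wordVal p w ∧ v.length ≤ w.length

variable {p}

lemma Reduces.trans {u v w : List Letter} (huv : Reduces p u v) (hvw : Reduces p v w) :
    Reduces p u w :=
  ⟨huv.1.trans hvw.1, huv.2.trans hvw.2⟩

lemma reduces_canonWord_of_top_eq_zero (k : ℕ) (ε : ℕ → ℤ) (q m : ℕ) (h : ε (q + 1) = 0) :
    Reduces p (canonWord k ε q m) (canonWord k ε (q + 1) (m + 1)) := by
  constructor
  · rw [wordVal_canonWord, wordVal_canonWord, sum_range_succ _ (q + 1), h, zero_mul, add_zero]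
    push_cast
    ring_nf
  · rw [length_canonWord, length_canonWord, sum_range_succ _ (q + 1), h]
    omega

lemma reduces_canonWord_of_bottom_eq_zero (k : ℕ) (ε : ℕ → ℤ) (q m : ℕ) (h : ε 0 = 0) :
    Reduces p (canonWord k (fun i => ε (i + 1)) q m) (canonWord (k + 1) ε (q + 1) m) := by
  constructor
  · rw [wordVal_canonWord, wordVal_canonWord, sum_range_succ_mul_pow _ _ (q + 1), h, zero_add,
      zpow_mul, zpow_natCast, ← gent_mul_gena_mul_gent_inv, conj_zpow]
    push_cast
    group
  · rw [length_canonWord, length_canonWord, sum_range_succ' _ (q + 1), h]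
    omega

lemma exists_reduces_canonWord_top_ne_zero (k m q : ℕ) (ε : ℕ → ℤ) (hq : k + m ≤ q)
    (hε : DigitBounds p ε q) :
    ∃ q' m', k + m' ≤ q' ∧ (0 < m' → ε q' ≠ 0) ∧ DigitBounds p ε q' ∧
      Reduces p (canonWord k ε q' m') (canonWord k ε q m) := by
  induction m generalizing q with
  | zero => exact ⟨q, 0, hq, by omega, hε, rfl, le_rfl⟩
  | succ m ih =>
    by_cases htop : ε q = 0
    · obtain ⟨q, rfl⟩ : ∃ q', q = q' + 1 := ⟨q - 1, by omega⟩
      have hε' : DigitBounds p ε q := ⟨fun i hi => hε.1 i (by omega), by have := hε.1 q; omega⟩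
      obtain ⟨q', m', hq', htop', hε'', hred⟩ := ih q (by omega) hε'
      exact ⟨q', m', hq', htop', hε'', hred.trans (reduces_canonWord_of_top_eq_zero k ε q m htop)⟩
    · exact ⟨q, m + 1, hq, fun _ => htop, hε, rfl, le_rfl⟩

lemma exists_reduces_canonWord_bottom_ne_zero (k m q : ℕ) (ε : ℕ → ℤ) (hq : k + m ≤ q)
    (htop : 0 < m → ε q ≠ 0) (hε : DigitBounds p ε q) :
    ∃ k' q' ε', k' + m ≤ q' ∧ (0 < k' → ε' 0 ≠ 0) ∧ (0 < m → ε' q' ≠ 0) ∧ DigitBounds p ε' q' ∧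
      Reduces p (canonWord k' ε' q' m) (canonWord k ε q m) := by
  induction k generalizing q ε with
  | zero => exact ⟨0, q, ε, hq, by omega, htop, hε, rfl, le_rfl⟩
  | succ k ih =>
    by_cases hbot : ε 0 = 0
    · obtain ⟨q, rfl⟩ : ∃ q', q = q' + 1 := ⟨q - 1, by omega⟩
      have hε' : DigitBounds p (fun i => ε (i + 1)) q :=
        ⟨fun i hi => hε.1 (i + 1) (by omega), hε.2⟩
      obtain ⟨k', q', ε', hq', hbot', htop', hε'', hred⟩ := ih q _ (by omega) htop hε'
      exact ⟨k', q', ε', hq', hbot', htop', hε'',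
        hred.trans (reduces_canonWord_of_bottom_eq_zero k ε q m hbot)⟩
    · exact ⟨k + 1, q, ε, hq, fun _ => hbot, htop, hε, rfl, le_rfl⟩

lemma exists_canonWord_reduces (hp : 2 ≤ p) (w : List Letter) (hw : 0 ≤ texp w) :
    ∃ k m q ε, k + m ≤ q ∧ DigitBounds p ε q ∧ Reduces p (canonWord k ε q m) w := by
  have := minPrefixTexp_nonpos w
  have := texp_le_maxPrefixTexp w
  obtain ⟨d, hd⟩ : ∃ d : ℕ, (d : ℤ) = -minPrefixTexp w := ⟨_, Int.toNat_of_nonneg (by omega)⟩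
  obtain ⟨u, hu⟩ : ∃ u : ℕ, (u : ℤ) = maxPrefixTexp w := ⟨_, Int.toNat_of_nonneg (by omega)⟩
  obtain ⟨s, hs⟩ : ∃ s : ℕ, (s : ℤ) = texp w := ⟨_, Int.toNat_of_nonneg hw⟩
  have hval := gent_pow_mul_wordVal p d w (by omega)
  have heval : (aPoly d w).eval (p : ℤ) =
      (aPoly d w).coeff 0 + p * ∑ l ∈ range (d + u), (aPoly d w).coeff (l + 1) * (p : ℤ) ^ l := by
    have := natDegree_aPoly_le d w (by omega)
    rw [eval_eq_sum_range' (n := d + u + 1) (by omega), sum_range_succ_mul_pow]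
  obtain ⟨q, ε, hq, hsum, hε, hcost⟩ :=
    exists_digits_eq_add_mul_sum hp (d + u) ((aPoly d w).coeff 0)
      fun l => (aPoly d w).coeff (l + 1)
  refine ⟨d, q - (d + s), q, ε, by omega, hε, ?_, ?_⟩
  · rw [wordVal_canonWord, hsum, ← heval, eq_inv_mul_of_mul_eq hval, ← hs]
    push_cast [show d + s ≤ q by omega]
    group
  · have hletters := sum_natAbs_coeff_aPoly_add_tCount_le d (d + u + 1) w
    have hwalk := two_mul_sub_le_tCount_add_natAbs w
    rw [sum_range_succ'] at hletters
    rw [length_canonWord]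
    omega

end Canonical

/-- Proposition 4.1, existence only: every word of length `n` with
nonnegative `t`-exponent sum is represented by a word `t⁻ᵏ a^{ε₀} t ⋯ t a^{ε_q} t⁻ᵐ`
of length at most `n`, with `ε₀ ≠ 0` if `k > 0`, `ε_q ≠ 0` if `m > 0`, `|ε_i| < p` for
`i < q`, `|ε_q| < 3p`, `k, m ≥ 0` and `q ≥ k + m`. -/
theorem stmt19 (p : ℕ) (hp : 2 ≤ p) (w : List Letter) (h : 0 ≤ texp w) :
    ∃ (k m q : ℕ) (ε : ℕ → ℤ), k + m ≤ q ∧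
      (0 < k → ε 0 ≠ 0) ∧ (0 < m → ε q ≠ 0) ∧
      (∀ i < q, (ε i).natAbs < p) ∧ (ε q).natAbs < 3 * p ∧
      wordVal p (canonWord k ε q m) = wordVal p w ∧
      (canonWord k ε q m).length ≤ w.length := by
  obtain ⟨k, m, q, ε, hq, hε, hred⟩ := exists_canonWord_reduces hp w h
  obtain ⟨q₁, m₁, hq₁, htop₁, hε₁, hred₁⟩ :=
    exists_reduces_canonWord_top_ne_zero k m q ε hq hε
  obtain ⟨k₂, q₂, ε₂, hq₂, hbot₂, htop₂, hε₂, hred₂⟩ :=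
    exists_reduces_canonWord_bottom_ne_zero k m₁ q₁ ε hq₁ htop₁ hε₁
  exact ⟨k₂, m₁, q₂, ε₂, hq₂, hbot₂, htop₂, hε₂.1, hε₂.2, hred₂.trans (hred₁.trans hred)⟩
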